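/- Let N be a binary normal network on X with no near-sibling and no near-stack reticulations, with reticulated cherry {a,b} (reticulation leaf b), and let g_b be the grandparent of b not equal to the parent of a. If c is in V_{g_b} and N displays ac|x for all x in X - (V_{g_b} ∪ {a,b}), then N displays neither ax|c nor ax|b for any x in X - (V_{g_b} ∪ {a,b}). -/

import Mathlib

/-- A (candidate) rooted phylogenetic network structure: a directed graph on a
vertex type `V` with a distinguished root and a labelling of (intended) leaves
by elements of `X`.  The combinatorial axioms are imposed by predicates below. -/
structure Network (X : Type) where
  V : Type
  arc : V → V → Prop
  root : V
  leaf : X → V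

namespace Network

variable {X : Type} (N : Network X)

def parents (v : N.V) : Set N.V := {u | N.arc u v}

def children (u : N.V) : Set N.V := {v | N.arc u v}

/-- in-degree 1, out-degree 2 -/
def IsTreeVertex (v : N.V) : Prop := (N.parents v).ncard = 1 ∧ (N.children v).ncard = 2

/-- in-degree 2, out-degree 1 -/
def IsRetic (v : N.V) : Prop := (N.parents v).ncard = 2 ∧ (N.children v).ncard = 1

/-- in-degree 1, out-degree 0 -/
def IsLeafVertex (v : N.V) : Prop := (N.parents v).ncard = 1 ∧ (N.children v).ncard = 0

def Acyclic : Prop := ∀ v : N.V, ¬ Relation.TransGen N.arc v v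

/-- A well-formed binary phylogenetic network (non-degenerate case): a finite
acyclic digraph with a root of in-degree 0 and out-degree 2, leaves of
in-degree 1 and out-degree 0 bijectively labelled by `X`, and all remaining
vertices tree vertices or reticulations. -/
def Wf : Prop :=
  Finite N.V ∧ N.Acyclic ∧
  (N.parents N.root).ncard = 0 ∧ (N.children N.root).ncard = 2 ∧
  Function.Injective N.leaf ∧
  (∀ x : X, N.IsLeafVertex (N.leaf x)) ∧
  (∀ v : N.V, v = N.root ∨ (∃ x, N.leaf x = v) ∨ N.IsTreeVertex v ∨ N.IsRetic v)

/-- The degenerate network on a single leaf: one vertex, no arcs. -/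
def Degenerate : Prop :=
  (∀ v : N.V, v = N.root) ∧ (∀ u v : N.V, ¬ N.arc u v) ∧
  (∃! _x : X, True) ∧ (∀ x : X, N.leaf x = N.root)

def IsBinaryPhylo : Prop := N.Wf ∨ N.Degenerate

/-- `l` is a directed path (a list of successively adjacent vertices) from `u` to `v`. -/
def IsPathFromTo (l : List N.V) (u v : N.V) : Prop :=
  l.Chain' N.arc ∧ l.head? = some u ∧ l.getLast? = some v

/-- `v` is a descendant of `u` (equivalently, `u` is an ancestor of `v`). -/
def Desc (u v : N.V) : Prop := Relation.ReflTransGen N.arc u v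

/-- The visibility set of `u`: those leaf labels `x` such that every directed
path from the root to the leaf labelled `x` traverses `u`. -/
def visSet (u : N.V) : Set X :=
  {x | ∀ l : List N.V, N.IsPathFromTo l N.root (N.leaf x) → u ∈ l}

/-- The cluster set of `u`: leaf labels of leaves that are descendants of `u`. -/
def cluster (u : N.V) : Set X := {x | N.Desc u (N.leaf x)}

/-- A tree path from `u` to `t`: a directed path whose vertices other than the
endpoints are tree vertices. -/
def IsTreePath (l : List N.V) (u t : N.V) : Prop :=
  N.IsPathFromTo l u t ∧ ∀ v ∈ l, v ≠ u → v ≠ t → N.IsTreeVertex v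

/-- Tree-child: every vertex with a child has a child that is a tree vertex or a leaf. -/
def TreeChild : Prop :=
  ∀ v : N.V, (∃ c, N.arc v c) → ∃ c, N.arc v c ∧ (N.IsTreeVertex c ∨ N.IsLeafVertex c)

/-- Some reticulation arc `(u,v)` is a shortcut: there is a directed path from
`u` to `v` avoiding the arc `(u,v)`. -/
def HasShortcut : Prop :=
  ∃ u v, N.arc u v ∧ N.IsRetic v ∧ ∃ w, N.arc u w ∧ w ≠ v ∧ N.Desc w v

/-- Normal: tree-child with no shortcuts. -/
def IsNormal : Prop := N.TreeChild ∧ ¬ N.HasShortcut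

def SiblingRetics (u v : N.V) : Prop :=
  u ≠ v ∧ N.IsRetic u ∧ N.IsRetic v ∧ ∃ p, N.arc p u ∧ N.arc p v

def StackRetics (u v : N.V) : Prop :=
  N.IsRetic u ∧ N.IsRetic v ∧ N.arc u v

/-- `u` and `v` are near-sibling reticulations: some tree vertex `t` has as its
two children `v` and a tree vertex `s` that is a parent of `u`. -/
def NearSiblingRetics (u v : N.V) : Prop :=
  u ≠ v ∧ N.IsRetic u ∧ N.IsRetic v ∧
  ∃ t s, N.IsTreeVertex t ∧ N.IsTreeVertex s ∧ N.arc t s ∧ N.arc t v ∧ N.arc s u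

/-- `u` and `v` are near-stack reticulations: the child of `u` is a tree vertex
that is a parent of `v`. -/
def NearStackRetics (u v : N.V) : Prop :=
  N.IsRetic u ∧ N.IsRetic v ∧ ∃ s, N.arc u s ∧ N.IsTreeVertex s ∧ N.arc s v

def NoNearRetics : Prop :=
  (∀ u v, ¬ N.NearSiblingRetics u v) ∧ (∀ u v, ¬ N.NearStackRetics u v)

/-- `{a,b}` is a cherry: the leaves labelled `a` and `b` share a parent. -/
def Cherry (a b : X) : Prop :=
  a ≠ b ∧ ∃ p, N.arc p (N.leaf a) ∧ N.arc p (N.leaf b)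

/-- `{a,b}` is a reticulated cherry with reticulation leaf `b`. -/
def ReticCherry (a b : X) : Prop :=
  a ≠ b ∧ ∃ pa pb, N.arc pa (N.leaf a) ∧ N.arc pb (N.leaf b) ∧
    N.IsRetic pb ∧ N.arc pa pb

/-- `N` displays the rooted triple `xy|z`: there is a subdigraph of `N` that
is a subdivision of the rooted triple tree with `z` adjacent to the root,
i.e. vertices `p` (the root image) and `q` (the image of the parent of `x,y`)
together with internally disjoint directed paths as below. -/
def Displays (x y z : X) : Prop :=
  x ≠ y ∧ x ≠ z ∧ y ≠ z ∧
  ∃ (p q : N.V) (l0 lx ly lz : List N.V),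
    p ≠ q ∧
    N.IsPathFromTo l0 p q ∧
    N.IsPathFromTo lx q (N.leaf x) ∧
    N.IsPathFromTo ly q (N.leaf y) ∧
    N.IsPathFromTo lz p (N.leaf z) ∧
    (∀ v ∈ lx, v ∈ ly → v = q) ∧
    (∀ v ∈ l0, v ∈ lx ∨ v ∈ ly → v = q) ∧
    (∀ v ∈ lz, v ∈ l0 ∨ v ∈ lx ∨ v ∈ ly → v = p)

/-- `R(N)`: the set of rooted triples displayed by `N`, encoded as ordered
triples `(x, y, z)` standing for `xy|z`. -/
def RDisp : Set (X × X × X) := {t | N.Displays t.1 t.2.1 t.2.2}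

/-- Isomorphism of networks on the same leaf set: a digraph isomorphism fixing
each leaf label. -/
def Isomorphic (N1 N2 : Network X) : Prop :=
  ∃ φ : N1.V ≃ N2.V,
    (∀ u v, N1.arc u v ↔ N2.arc (φ u) (φ v)) ∧ (∀ x, φ (N1.leaf x) = N2.leaf x)

/-- A candidate set for `b` (relative to `a`): a non-empty subset
`W ⊆ X - {a,b}` satisfying conditions (W1)–(W5). -/
def CandidateSet (a b : X) (W : Set X) : Prop :=
  W.Nonempty ∧ a ∉ W ∧ b ∉ W ∧
  -- (W1)
  (∀ c ∈ W, ∀ x : X, x ∉ W → x ≠ b →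
    N.Displays b c x ∧ ¬ N.Displays a c b) ∧
  -- (W2)
  (∀ c ∈ W, ∀ c' ∈ W, c ≠ c' → ¬ N.Displays b c c') ∧
  -- (W3)
  (∀ c ∈ W, ∀ x : X, x ∉ W → x ≠ a → x ≠ b →
    (N.Displays c x a ↔ N.Displays b x a)) ∧
  -- (W4)
  (∀ x y : X, x ∉ W → x ≠ a → x ≠ b → y ∉ W → y ≠ a → y ≠ b →
    N.Displays b x y → ¬ N.Displays a x y → ∀ c ∈ W, N.Displays c x y) ∧
  -- (W5)
  (∀ c ∈ W, (∀ x : X, x ∉ W → x ≠ a → x ≠ b → N.Displays a c x) →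
    ∀ x : X, x ∉ W → x ≠ a → x ≠ b → ¬ N.Displays a x c ∧ ¬ N.Displays a x b)

end Network

/-!
A display of `ax|c` can be rerouted, at the vertex `g_b` through which its path to `c` must pass,
into a display of `ax|b`, so it suffices to exclude `ax|b`. In a display of `ay|z` with
`y ∉ {a, b}`, the path from the cherry vertex down to `a` passes through the parent `f` of `p_a`,
and some path from the root to `z` avoids `f`. For `ax|b` this is impossible when `f` is the root
or a parent of `g_b`, as `f` then lies on every path from the root to `b`. Otherwise `f` is a
tree vertex (no near-stack reticulations) whose other child is no reticulation (no near-sibling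
reticulations), and descending from it through non-reticulations other than `g_b` reaches a leaf
`y ∉ V_{g_b}` all of whose root paths pass through `f`; then `N` cannot display `ac|y`, contrary
to the hypothesis.
-/

theorem Set.eq_of_mem_of_ncard_eq_one {α : Type*} {s : Set α} {a b : α} (hs : s.ncard = 1)
    (ha : a ∈ s) (hb : b ∈ s) : a = b := by
  obtain ⟨c, rfl⟩ := Set.ncard_eq_one.mp hs
  exact ha.trans hb.symm

theorem Set.eq_or_eq_of_ncard_eq_two {α : Type*} {s : Set α} {a b c : α} (hs : s.ncard = 2)
    (ha : a ∈ s) (hb : b ∈ s) (hab : a ≠ b) (hc : c ∈ s) : c = a ∨ c = b := by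
  obtain ⟨x, y, -, rfl⟩ := Set.ncard_eq_two.mp hs
  simp only [Set.mem_insert_iff, Set.mem_singleton_iff] at ha hb hc
  grind

namespace Network

variable {X : Type} {N : Network X}

lemma IsTreeVertex.not_isRetic {v : N.V} (h : N.IsTreeVertex v) : ¬ N.IsRetic v :=
  fun hr => by have := h.1; have := hr.1; omega

lemma IsLeafVertex.not_isRetic {v : N.V} (h : N.IsLeafVertex v) : ¬ N.IsRetic v :=
  fun hr => by have := h.1; have := hr.1; omega

lemma not_isRetic_of_arc_of_arc {v w₁ w₂ : N.V} (h₁ : N.arc v w₁) (h₂ : N.arc v w₂)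
    (hne : w₁ ≠ w₂) : ¬ N.IsRetic v :=
  fun hv => hne (Set.eq_of_mem_of_ncard_eq_one hv.2 h₁ h₂)

namespace Wf

variable {u v w : N.V}

lemma acyclic (hW : N.Wf) : N.Acyclic := hW.2.1

lemma leaf_injective (hW : N.Wf) : Function.Injective N.leaf := hW.2.2.2.2.1

lemma isLeafVertex (hW : N.Wf) (x : X) : N.IsLeafVertex (N.leaf x) := hW.2.2.2.2.2.1 x

lemma not_arc_self (hW : N.Wf) (v : N.V) : ¬ N.arc v v := fun h => hW.acyclic v (.single h)

lemma not_arc_root (hW : N.Wf) (u : N.V) : ¬ N.arc u N.root := by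
  have := hW.1
  have h : N.parents N.root = ∅ := (Set.ncard_eq_zero).mp hW.2.2.1
  exact fun hu => (h ▸ hu : u ∈ (∅ : Set N.V))

lemma not_arc_leaf (hW : N.Wf) (x : X) (v : N.V) : ¬ N.arc (N.leaf x) v := by
  have := hW.1
  have h : N.children (N.leaf x) = ∅ := (Set.ncard_eq_zero).mp (hW.isLeafVertex x).2
  exact fun hv => (h ▸ hv : v ∈ (∅ : Set N.V))

lemma leaf_ne_of_arc (hW : N.Wf) (h : N.arc v w) (x : X) : N.leaf x ≠ v :=
  fun e => hW.not_arc_leaf x w (e ▸ h)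

lemma eq_of_desc_leaf (hW : N.Wf) {x : X} (h : N.Desc (N.leaf x) v) : v = N.leaf x := by
  rcases h.cases_head with e | ⟨w, hw, -⟩
  · exact e.symm
  · exact absurd hw (hW.not_arc_leaf x w)

lemma desc_antisymm (hW : N.Wf) (huv : N.Desc u v) (hvu : N.Desc v u) : u = v := by
  rcases huv.cases_head with e | ⟨w, huw, hwv⟩
  · exact e
  · exact absurd (Relation.TransGen.head' huw (hwv.trans hvu)) (hW.acyclic u)

lemma wellFounded_ancestor (hW : N.Wf) : WellFounded (Relation.TransGen N.arc) := by
  have := hW.1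
  have : Std.Irrefl (Relation.TransGen N.arc) := ⟨hW.acyclic⟩
  exact Finite.wellFounded_of_trans_of_irrefl _

lemma wellFounded_descendant (hW : N.Wf) : WellFounded (flip (Relation.TransGen N.arc)) := by
  have := hW.1
  have : Std.Irrefl (flip (Relation.TransGen N.arc)) := ⟨hW.acyclic⟩
  have : IsTrans N.V (flip (Relation.TransGen N.arc)) :=
    ⟨fun _ _ _ h₁ h₂ => h₂.trans h₁⟩
  exact Finite.wellFounded_of_trans_of_irrefl _

lemma isTreeVertex_or_exists_leaf (hW : N.Wf) (hv : v ≠ N.root) (hr : ¬ N.IsRetic v) :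
    N.IsTreeVertex v ∨ ∃ x, N.leaf x = v := by
  rcases hW.2.2.2.2.2.2 v with h | h | h | h
  exacts [absurd h hv, .inr h, .inl h, absurd h hr]

lemma isTreeVertex_of_arc (hW : N.Wf) (huv : N.arc u v) (hvw : N.arc v w)
    (hr : ¬ N.IsRetic v) : N.IsTreeVertex v :=
  (hW.isTreeVertex_or_exists_leaf (fun e => hW.not_arc_root u (e ▸ huv)) hr).resolve_right
    fun ⟨x, hx⟩ => hW.leaf_ne_of_arc hvw x hx

lemma parents_ncard_eq_one (hW : N.Wf) (hv : v ≠ N.root) (hr : ¬ N.IsRetic v) :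
    (N.parents v).ncard = 1 := by
  rcases hW.isTreeVertex_or_exists_leaf hv hr with h | ⟨x, rfl⟩
  exacts [h.1, (hW.isLeafVertex x).1]

lemma eq_of_arc_of_arc_leaf (hW : N.Wf) {x : X} (hu : N.arc u (N.leaf x))
    (hw : N.arc w (N.leaf x)) : w = u :=
  Set.eq_of_mem_of_ncard_eq_one (hW.isLeafVertex x).1 hw hu

lemma eq_or_eq_of_arc (hW : N.Wf) {w₁ w₂ : N.V} (h₁ : N.arc v w₁) (h₂ : N.arc v w₂)
    (hne : w₁ ≠ w₂) (hw : N.arc v w) : w = w₁ ∨ w = w₂ := by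
  have hchildren : (N.children v).ncard = 2 := by
    rcases hW.2.2.2.2.2.2 v with rfl | ⟨x, rfl⟩ | h | h
    exacts [hW.2.2.2.1, absurd h₁ (hW.not_arc_leaf x w₁), h.2,
      absurd h (not_isRetic_of_arc_of_arc h₁ h₂ hne)]
  exact Set.eq_or_eq_of_ncard_eq_two hchildren h₁ h₂ hne hw

lemma exists_arc_of_ne_root (hW : N.Wf) (hv : v ≠ N.root) : ∃ u, N.arc u v := by
  have : (N.parents v).ncard ≠ 0 := by
    rcases hW.2.2.2.2.2.2 v with h | ⟨x, rfl⟩ | h | h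
    exacts [absurd h hv, by simp [(hW.isLeafVertex x).1], by simp [h.1], by simp [h.1]]
  exact Set.nonempty_of_ncard_ne_zero this

lemma desc_root (hW : N.Wf) (v : N.V) : N.Desc N.root v := by
  induction v using hW.wellFounded_ancestor.induction with
  | _ v ih =>
    by_cases hv : v = N.root
    · exact hv ▸ Relation.ReflTransGen.refl
    · obtain ⟨u, hu⟩ := hW.exists_arc_of_ne_root hv
      exact (ih u (.single hu)).tail hu

end Wf

namespace IsPathFromTo

variable {l : List N.V} {u v w : N.V}

lemma ne_nil (h : N.IsPathFromTo l u v) : l ≠ [] := by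
  rintro rfl
  exact absurd h.2.1 (by simp)

lemma head_mem (h : N.IsPathFromTo l u v) : u ∈ l := List.mem_of_mem_head? h.2.1

lemma getLast_mem (h : N.IsPathFromTo l u v) : v ∈ l := List.mem_of_getLast? h.2.2

lemma desc (h : N.IsPathFromTo l u v) : N.Desc u v := by
  have hd := List.relationReflTransGen_of_exists_isChain l h.1 h.ne_nil
  rwa [(List.head_eq_iff_head?_eq_some _).mpr h.2.1,
    (List.getLast_eq_iff_getLast?_eq_some _).mpr h.2.2] at hd

lemma split (h : N.IsPathFromTo l u v) (hw : w ∈ l) :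
    ∃ s t, l = s ++ w :: t ∧ N.IsPathFromTo (s ++ [w]) u w ∧ N.IsPathFromTo (w :: t) w v := by
  obtain ⟨s, t, rfl⟩ := List.append_of_mem hw
  obtain ⟨hch, hhead, hlast⟩ := h
  refine ⟨s, t, rfl, ⟨hch.prefix ⟨t, by simp⟩, ?_, by simp⟩,
    ⟨hch.suffix ⟨s, rfl⟩, rfl, ?_⟩⟩
  · cases s <;> simp_all
  · simpa [List.getLast?_append] using hlast

lemma desc_of_mem (h : N.IsPathFromTo l u v) (hw : w ∈ l) : N.Desc u w := by
  obtain ⟨_, _, _, hpre, _⟩ := h.split hw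
  exact hpre.desc

lemma desc_to_of_mem (h : N.IsPathFromTo l u v) (hw : w ∈ l) : N.Desc w v := by
  obtain ⟨_, _, _, _, hsuf⟩ := h.split hw
  exact hsuf.desc

lemma exists_prefix (h : N.IsPathFromTo l u v) (hw : w ∈ l) :
    ∃ l', N.IsPathFromTo l' u w ∧ l' ⊆ l := by
  obtain ⟨s, t, rfl, hpre, _⟩ := h.split hw
  refine ⟨s ++ [w], hpre, fun z hz => ?_⟩
  simp only [List.mem_append, List.mem_cons] at hz ⊢
  tauto

lemma exists_pred (h : N.IsPathFromTo l u v) (hw : w ∈ l) (hwu : w ≠ u) :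
    ∃ z ∈ l, N.arc z w := by
  obtain ⟨s, t, rfl, hpre, _⟩ := h.split hw
  rcases List.eq_nil_or_concat s with rfl | ⟨s', z, rfl⟩
  · exact absurd (by simpa using hpre.2.1) hwu
  · refine ⟨z, by simp, ?_⟩
    simpa using (List.isChain_append.mp hpre.1).2.2

lemma singleton (u : N.V) : N.IsPathFromTo [u] u u := ⟨List.isChain_singleton u, rfl, rfl⟩

lemma append {m : List N.V} (hl : N.IsPathFromTo l u v) (hm : N.IsPathFromTo m v w) :
    N.IsPathFromTo (l ++ m.tail) u w := by
  obtain ⟨t, rfl⟩ := List.head?_eq_some_iff.mp hm.2.1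
  obtain ⟨l₀, rfl⟩ := List.getLast?_eq_some_iff.mp hl.2.2
  refine ⟨hl.1.append_overlap hm.1 (List.cons_ne_nil _ _), ?_, ?_⟩
  · simpa [List.head?_append] using hl.2.1
  · simpa [List.getLast?_append] using hm.2.2

lemma concat (h : N.IsPathFromTo l u v) (hvw : N.arc v w) : N.IsPathFromTo (l ++ [w]) u w :=
  h.append (⟨List.isChain_pair.mpr hvw, rfl, rfl⟩ : N.IsPathFromTo [v, w] v w)

end IsPathFromTo

lemma exists_path_of_desc {u v : N.V} (h : N.Desc u v) : ∃ l, N.IsPathFromTo l u v := by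
  induction h with
  | refl => exact ⟨[u], .singleton u⟩
  | tail _ hvw ih =>
    obtain ⟨l, hl⟩ := ih
    exact ⟨_, hl.concat hvw⟩

lemma Wf.exists_path_from_root (hW : N.Wf) (v : N.V) : ∃ l, N.IsPathFromTo l N.root v :=
  exists_path_of_desc (hW.desc_root v)

def Dominates (u v : N.V) : Prop := ∀ l, N.IsPathFromTo l N.root v → u ∈ l

lemma mem_visSet_iff {u : N.V} {x : X} : x ∈ N.visSet u ↔ N.Dominates u (N.leaf x) := Iff.rfl

lemma dominates_root (v : N.V) : N.Dominates N.root v := fun _ hl => hl.head_mem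

lemma dominates_self (v : N.V) : N.Dominates v v := fun _ hl => hl.getLast_mem

namespace Dominates

variable {u v w : N.V}

lemma trans (huv : N.Dominates u v) (hvw : N.Dominates v w) : N.Dominates u w := by
  intro l hl
  obtain ⟨l', hl', hsub⟩ := hl.exists_prefix (hvw l hl)
  exact hsub (huv l' hl')

lemma of_arc (h : N.Dominates u w) (hvw : N.arc v w) (huw : u ≠ w) : N.Dominates u v := by
  intro l hl
  simpa [huw] using h _ (hl.concat hvw)

lemma desc (hW : N.Wf) (h : N.Dominates u v) : N.Desc u v := by
  obtain ⟨l, hl⟩ := hW.exists_path_from_root v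
  exact hl.desc_to_of_mem (h l hl)

lemma mem_of_path (hW : N.Wf) (h : N.Dominates u v) {l : List N.V} {p : N.V}
    (hl : N.IsPathFromTo l p v) (hup : ¬ N.Desc u p) : u ∈ l := by
  obtain ⟨R, hR⟩ := hW.exists_path_from_root p
  rcases List.mem_append.mp (h _ (hR.append hl)) with hu | hu
  · exact absurd (hR.desc_to_of_mem hu) hup
  · exact List.mem_of_mem_tail hu

lemma desc_of_not_desc (hW : N.Wf) (h : N.Dominates u v) {p : N.V} (hpv : N.Desc p v)
    (hup : ¬ N.Desc u p) : N.Desc p u := by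
  obtain ⟨l, hl⟩ := exists_path_of_desc hpv
  exact hl.desc_of_mem (h.mem_of_path hW hl hup)

end Dominates

lemma dominates_of_forall_arc {u v : N.V} (hv : v ≠ N.root)
    (h : ∀ w, N.arc w v → N.Dominates u w) : N.Dominates u v := by
  intro l hl
  obtain ⟨w, hw, hwv⟩ := hl.exists_pred hl.getLast_mem hv
  obtain ⟨l', hl', hsub⟩ := hl.exists_prefix hw
  exact hsub (h w hwv l' hl')

lemma Wf.dominates_of_arc (hW : N.Wf) {u v w : N.V} (hv : (N.parents v).ncard = 1)
    (hwv : N.arc w v) (hu : N.Dominates u w) : N.Dominates u v :=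
  dominates_of_forall_arc (fun e => hW.not_arc_root w (e ▸ hwv)) fun _ hw' =>
    Set.eq_of_mem_of_ncard_eq_one hv hw' hwv ▸ hu

lemma Wf.not_desc_of_arc (hW : N.Wf) {f u w : N.V} (hu : (N.parents u).ncard = 1)
    (hfu : N.arc f u) (hfw : N.arc f w) (hwu : w ≠ u) : ¬ N.Desc w u := by
  intro h
  rcases h.cases_tail with e | ⟨z, hwz, hzu⟩
  · exact hwu e.symm
  · obtain rfl := Set.eq_of_mem_of_ncard_eq_one hu hzu hfu
    exact hW.acyclic z (Relation.TransGen.head' hfw hwz)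

lemma Wf.exists_leaf_dominated (hW : N.Wf) {g w : N.V}
    (hchild : ∀ v, N.Desc w v → N.IsTreeVertex v →
      ∃ v', N.arc v v' ∧ v' ≠ g ∧ ¬ N.IsRetic v')
    (hw : w ≠ N.root) (hwr : ¬ N.IsRetic w) (hgw : ¬ N.Dominates g w) :
    ∃ y, N.Dominates w (N.leaf y) ∧ ¬ N.Dominates g (N.leaf y) := by
  suffices ∀ v, N.Desc w v → v ≠ N.root → ¬ N.IsRetic v → N.Dominates w v →
      ¬ N.Dominates g v → ∃ y, N.Dominates w (N.leaf y) ∧ ¬ N.Dominates g (N.leaf y) from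
    this w .refl hw hwr (dominates_self w) hgw
  intro v
  induction v using hW.wellFounded_descendant.induction with
  | _ v ih =>
    intro hwv hv hvr hdom hgv
    rcases hW.isTreeVertex_or_exists_leaf hv hvr with hvt | ⟨y, rfl⟩
    · obtain ⟨v', hvv', hv'g, hv'r⟩ := hchild v hwv hvt
      have hv' : v' ≠ N.root := fun e => hW.not_arc_root v (e ▸ hvv')
      exact ih v' (.single hvv') (hwv.tail hvv') hv' hv'r
        (hW.dominates_of_arc (hW.parents_ncard_eq_one hv' hv'r) hvv' hdom)
        fun h => hgv (h.of_arc hvv' (Ne.symm hv'g))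
    · exact ⟨y, hdom, hgv⟩

lemma Displays.exists_path_not_dominates (hW : N.Wf) {x y z : X} (h : N.Displays x y z) :
    ∃ q lx, N.IsPathFromTo lx q (N.leaf x) ∧ N.Desc q (N.leaf y) ∧
      ∀ f ∈ lx, ¬ N.Dominates f (N.leaf z) := by
  obtain ⟨-, -, -, p, q, l0, lx, ly, lz, hpq, h0, hx, hy, hz, -, -, hzall⟩ := h
  refine ⟨q, lx, hx, hy.desc, fun f hf hdom => hpq ?_⟩
  obtain ⟨R, hR⟩ := hW.exists_path_from_root p
  have hfp : N.Desc f p := by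
    rcases List.mem_append.mp (hdom _ (hR.append hz)) with hfR | hfz
    · exact hR.desc_to_of_mem hfR
    · rw [hzall f (List.mem_of_mem_tail hfz) (.inr (.inl hf))]
      exact .refl
  exact hW.desc_antisymm h0.desc ((hx.desc_of_mem hf).trans hfp)

/-- The paper's `p_a`, `p_b` and `g_b` for the reticulated cherry `{a,b}` with reticulation
leaf `b`. -/
structure IsReticCherryAt (N : Network X) (a b : X) (pa pb gb : N.V) : Prop where
  arc_pa : N.arc pa (N.leaf a)
  arc_pb : N.arc pb (N.leaf b)
  isRetic_pb : N.IsRetic pb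
  arc_pa_pb : N.arc pa pb
  arc_gb_pb : N.arc gb pb
  gb_ne_pa : gb ≠ pa

namespace IsReticCherryAt

variable {a b : X} {pa pb gb : N.V}

lemma eq_or_eq_of_arc_pb (hC : N.IsReticCherryAt a b pa pb gb) {u : N.V} (hu : N.arc u pb) :
    u = pa ∨ u = gb :=
  Set.eq_or_eq_of_ncard_eq_two hC.isRetic_pb.1 hC.arc_pa_pb hC.arc_gb_pb hC.gb_ne_pa.symm hu

lemma isTreeVertex_pa (hC : N.IsReticCherryAt a b pa pb gb) (hW : N.Wf) {f : N.V}
    (hf : N.arc f pa) : N.IsTreeVertex pa :=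
  hW.isTreeVertex_of_arc hf hC.arc_pa <|
    not_isRetic_of_arc_of_arc hC.arc_pa hC.arc_pa_pb (hW.leaf_ne_of_arc hC.arc_pb a)

lemma eq_of_desc_pb (hC : N.IsReticCherryAt a b pa pb gb) (hW : N.Wf) {y : X}
    (h : N.Desc pb (N.leaf y)) : y = b := by
  rcases h.cases_head with e | ⟨w, hw, hwy⟩
  · exact absurd e.symm (hW.leaf_ne_of_arc hC.arc_pb y)
  · obtain rfl := Set.eq_of_mem_of_ncard_eq_one hC.isRetic_pb.2 hw hC.arc_pb
    exact hW.leaf_injective (hW.eq_of_desc_leaf hwy)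

lemma eq_or_eq_of_desc_pa (hC : N.IsReticCherryAt a b pa pb gb) (hW : N.Wf) {y : X}
    (h : N.Desc pa (N.leaf y)) : y = a ∨ y = b := by
  rcases h.cases_head with e | ⟨w, hw, hwy⟩
  · exact absurd e.symm (hW.leaf_ne_of_arc hC.arc_pa y)
  rcases hW.eq_or_eq_of_arc hC.arc_pa hC.arc_pa_pb (hW.leaf_ne_of_arc hC.arc_pb a) hw
    with rfl | rfl
  · exact .inl (hW.leaf_injective (hW.eq_of_desc_leaf hwy))
  · exact .inr (hC.eq_of_desc_pb hW hwy)

lemma not_desc_gb_pa (hC : N.IsReticCherryAt a b pa pb gb) (hW : N.Wf)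
    (hsc : ¬ N.HasShortcut) : ¬ N.Desc gb pa := by
  intro h
  rcases h.cases_head with e | ⟨w, hw, hwpa⟩
  · exact hC.gb_ne_pa e
  by_cases hwpb : w = pb
  · exact hW.acyclic pa (Relation.TransGen.head' hC.arc_pa_pb (hwpb ▸ hwpa))
  · exact hsc ⟨gb, pb, hC.arc_gb_pb, hC.isRetic_pb, w, hw, hwpb, hwpa.tail hC.arc_pa_pb⟩

lemma not_desc_gb_leaf_a (hC : N.IsReticCherryAt a b pa pb gb) (hW : N.Wf)
    (hsc : ¬ N.HasShortcut) : ¬ N.Desc gb (N.leaf a) := by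
  intro h
  rcases h.cases_tail with e | ⟨z, hgz, hza⟩
  · exact hW.leaf_ne_of_arc hC.arc_gb_pb a e
  · exact hC.not_desc_gb_pa hW hsc (hW.eq_of_arc_of_arc_leaf hC.arc_pa hza ▸ hgz)

lemma not_mem_visSet_b (hC : N.IsReticCherryAt a b pa pb gb) (hW : N.Wf)
    (hsc : ¬ N.HasShortcut) : b ∉ N.visSet gb := by
  intro h
  have hgb : gb ≠ pb := fun e => hW.not_arc_self gb (e ▸ hC.arc_gb_pb)
  have hpa : N.Dominates gb pa :=
    ((mem_visSet_iff.mp h).of_arc hC.arc_pb (hW.leaf_ne_of_arc hC.arc_gb_pb b).symm).of_arc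
      hC.arc_pa_pb hgb
  exact hC.not_desc_gb_pa hW hsc (hpa.desc hW)

lemma isTreeVertex_gb (hC : N.IsReticCherryAt a b pa pb gb) (hW : N.Wf) (hTC : N.TreeChild)
    {v : N.V} (hv : N.arc v gb) : N.IsTreeVertex gb := by
  refine hW.isTreeVertex_of_arc hv hC.arc_gb_pb fun hr => ?_
  obtain ⟨w, hgw, hw⟩ := hTC gb ⟨pb, hC.arc_gb_pb⟩
  obtain rfl := Set.eq_of_mem_of_ncard_eq_one hr.2 hgw hC.arc_gb_pb
  exact hw.elim (·.not_isRetic hC.isRetic_pb) (·.not_isRetic hC.isRetic_pb)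

lemma exists_child_ne_gb (hC : N.IsReticCherryAt a b pa pb gb) (hW : N.Wf) (hTC : N.TreeChild)
    (hNS : ∀ u v, ¬ N.NearSiblingRetics u v) {v : N.V} (hv : N.IsTreeVertex v)
    (hvpa : v ≠ pa) :
    ∃ w, N.arc v w ∧ w ≠ gb ∧ ¬ N.IsRetic w := by
  obtain ⟨c, hvc⟩ := Set.nonempty_of_ncard_ne_zero (s := N.children v) (by rw [hv.2]; norm_num)
  obtain ⟨t, hvt, ht⟩ := hTC v ⟨c, hvc⟩
  by_cases htgb : t = gb
  · rw [htgb] at hvt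
    obtain ⟨w, hvw, hwgb⟩ := Set.exists_ne_of_one_lt_ncard (by rw [hv.2]; norm_num) gb
    refine ⟨w, hvw, hwgb, fun hwr => hNS pb w ⟨?_, hC.isRetic_pb, hwr, v, gb, hv,
      hC.isTreeVertex_gb hW hTC hvt, hvt, hvw, hC.arc_gb_pb⟩⟩
    rintro rfl
    rcases hC.eq_or_eq_of_arc_pb hvw with rfl | rfl
    exacts [hvpa rfl, hW.not_arc_self v hvt]
  · exact ⟨t, hvt, htgb, ht.elim (·.not_isRetic) (·.not_isRetic)⟩

lemma exists_arc_pa_not_dominates (hC : N.IsReticCherryAt a b pa pb gb) (hW : N.Wf) {y z : X}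
    (h : N.Displays a y z) (hyb : y ≠ b) : ∃ f, N.arc f pa ∧ ¬ N.Dominates f (N.leaf z) := by
  obtain ⟨q, lA, hA, hqy, hlA⟩ := h.exists_path_not_dominates hW
  have hqa : N.leaf a ≠ q := fun e =>
    h.1 (hW.leaf_injective (hW.eq_of_desc_leaf (e ▸ hqy))).symm
  have hqpa : pa ≠ q := fun e =>
    (hC.eq_or_eq_of_desc_pa hW (e ▸ hqy)).elim (fun e => h.1 e.symm) hyb
  obtain ⟨u, huA, hu⟩ := hA.exists_pred hA.getLast_mem hqa
  obtain rfl := hW.eq_of_arc_of_arc_leaf hC.arc_pa hu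
  obtain ⟨f, hfA, hf⟩ := hA.exists_pred huA hqpa
  exact ⟨f, hf, hlA f hfA⟩

lemma dominates_leaf_b (hC : N.IsReticCherryAt a b pa pb gb) (hW : N.Wf) (hTC : N.TreeChild)
    {f : N.V} (hf : N.arc f pa) (hfgb : N.arc f gb) : N.Dominates f (N.leaf b) := by
  have hpa := hW.dominates_of_arc (hC.isTreeVertex_pa hW hf).1 hf (dominates_self f)
  have hgb := hW.dominates_of_arc (hC.isTreeVertex_gb hW hTC hfgb).1 hfgb (dominates_self f)
  have hpb : N.Dominates f pb :=
    dominates_of_forall_arc (fun e => hW.not_arc_root pa (e ▸ hC.arc_pa_pb)) fun u hu =>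
      (hC.eq_or_eq_of_arc_pb hu).elim (· ▸ hpa) (· ▸ hgb)
  exact hW.dominates_of_arc (hW.isLeafVertex b).1 hC.arc_pb hpb

lemma exists_leaf_dominated (hC : N.IsReticCherryAt a b pa pb gb) (hW : N.Wf)
    (hn : N.IsNormal) (hnear : N.NoNearRetics) {f : N.V} (hf : N.arc f pa) (hfr : f ≠ N.root)
    (hfgb : ¬ N.arc f gb) :
    ∃ y, y ∉ N.visSet gb ∧ y ≠ a ∧ y ≠ b ∧ N.Dominates f (N.leaf y) := by
  have hpat := hC.isTreeVertex_pa hW hf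
  have hfr' : ¬ N.IsRetic f := fun hr =>
    hnear.2 f pb ⟨hr, hC.isRetic_pb, pa, hf, hpat, hC.arc_pa_pb⟩
  obtain ⟨u, hu⟩ := hW.exists_arc_of_ne_root hfr
  have hft := hW.isTreeVertex_of_arc hu hf hfr'
  obtain ⟨w, hfw, hwpa⟩ := Set.exists_ne_of_one_lt_ncard (by rw [hft.2]; norm_num) pa
  have hwpb : pb ≠ w := by
    rintro rfl
    rcases hC.eq_or_eq_of_arc_pb hfw with rfl | rfl
    exacts [hW.not_arc_self f hf, hC.not_desc_gb_pa hW hn.2 (.single hf)]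
  have hwr : ¬ N.IsRetic w := fun hr =>
    hnear.1 pb w ⟨hwpb, hC.isRetic_pb, hr, f, pa, hft, hpat, hf, hfw, hC.arc_pa_pb⟩
  have hw : w ≠ N.root := fun e => hW.not_arc_root f (e ▸ hfw)
  have hw1 := hW.parents_ncard_eq_one hw hwr
  have hwpa' : ¬ N.Desc w pa := hW.not_desc_of_arc hpat.1 hf hfw hwpa
  have hpaw : ¬ N.Desc pa w := hW.not_desc_of_arc hw1 hfw hf (Ne.symm hwpa)
  have hgbw : ¬ N.Dominates gb w := fun h =>
    hC.not_desc_gb_pa hW hn.2 (((h.of_arc hfw fun e => hfgb (e ▸ hfw)).desc hW).tail hf)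
  obtain ⟨y, hwy, hgby⟩ := hW.exists_leaf_dominated (g := gb)
    (fun v hv hvt => hC.exists_child_ne_gb hW hn.1 hnear.1 hvt fun e => hwpa' (e ▸ hv))
    hw hwr hgbw
  have hy : ¬ N.Desc pa (N.leaf y) := fun h => hpaw (hwy.desc_of_not_desc hW h hwpa')
  refine ⟨y, hgby, ?_, ?_, (hW.dominates_of_arc hw1 hfw (dominates_self f)).trans hwy⟩
  · rintro rfl
    exact hy (.single hC.arc_pa)
  · rintro rfl
    exact hy ((Relation.ReflTransGen.single hC.arc_pa_pb).tail hC.arc_pb)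

lemma displays_of_mem_visSet (hC : N.IsReticCherryAt a b pa pb gb) (hW : N.Wf)
    (hsc : ¬ N.HasShortcut) (hab : a ≠ b) {c x : X} (hc : c ∈ N.visSet gb) (hxb : x ≠ b)
    (h : N.Displays a x c) : N.Displays a x b := by
  obtain ⟨hax, -, -, p, q, l0, lA, lX, lC, hpq, h0, hA, hX, hCp, hAX, h0AX, hCall⟩ := h
  have hgbC : gb ∈ lC := (mem_visSet_iff.mp hc).mem_of_path hW hCp fun hgp =>
    hC.not_desc_gb_leaf_a hW hsc (hgp.trans (h0.desc.trans hA.desc))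
  obtain ⟨l₁, hl₁, hsub⟩ := hCp.exists_prefix hgbC
  have hfresh : ∀ w, N.Desc pb w → w ∉ l0 ∧ w ∉ lA ∧ w ∉ lX := fun w hw =>
    ⟨fun hw0 => hab (hC.eq_of_desc_pb hW (hw.trans ((h0.desc_to_of_mem hw0).trans hA.desc))),
      fun hwA => hab (hC.eq_of_desc_pb hW (hw.trans (hA.desc_to_of_mem hwA))),
      fun hwX => hxb (hC.eq_of_desc_pb hW (hw.trans (hX.desc_to_of_mem hwX)))⟩
  refine ⟨hax, hab, hxb, p, q, l0, lA, lX, l₁ ++ [pb] ++ [N.leaf b], hpq, h0, hA, hX,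
    (hl₁.concat hC.arc_gb_pb).concat hC.arc_pb, hAX, h0AX, fun v hv hmem => ?_⟩
  simp only [List.mem_append, List.mem_singleton] at hv
  rcases hv with (hv | rfl) | rfl
  · exact hCall v (hsub hv) hmem
  · have := hfresh v .refl
    tauto
  · have := hfresh _ (.single hC.arc_pb)
    tauto

end IsReticCherryAt

end Network

/-- Lemma (vi): for a reticulated cherry `{a,b}` with reticulation leaf `b` in
a binary normal network `N` with no near-sibling and no near-stack
reticulations, with `g_b` the grandparent of `b` other than the parent `p_a` of
`a`: if `c ∈ V_{g_b}` and `N` displays `ac|x` for all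
`x ∈ X - (V_{g_b} ∪ {a,b})`, then `N` displays neither `ax|c` nor `ax|b` for
any `x ∈ X - (V_{g_b} ∪ {a,b})`. -/
theorem vgb_property_vi {X : Type} (N : Network X)
    (h : N.IsBinaryPhylo) (hn : N.IsNormal) (hnear : N.NoNearRetics)
    (a b : X) (hab : a ≠ b) (pa pb gb : N.V)
    (hpa : N.arc pa (N.leaf a)) (hpb : N.arc pb (N.leaf b))
    (hretic : N.IsRetic pb) (hpapb : N.arc pa pb) (hgbpb : N.arc gb pb)
    (hgbpa : gb ≠ pa) :
    ∀ c ∈ N.visSet gb,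
      (∀ x : X, x ∉ N.visSet gb → x ≠ a → x ≠ b → N.Displays a c x) →
      ∀ x : X, x ∉ N.visSet gb → x ≠ a → x ≠ b →
        ¬ N.Displays a x c ∧ ¬ N.Displays a x b := by
  intro c hc hd x _ _ hxb
  have hW : N.Wf := h.resolve_right fun hdeg => hdeg.2.1 _ _ hpa
  have hC : N.IsReticCherryAt a b pa pb gb := ⟨hpa, hpb, hretic, hpapb, hgbpb, hgbpa⟩
  have hnaxb : ¬ N.Displays a x b := by
    intro haxb
    obtain ⟨f, hf, hfb⟩ := hC.exists_arc_pa_not_dominates hW haxb hxb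
    by_cases hfr : f = N.root
    · exact hfb (hfr ▸ Network.dominates_root _)
    by_cases hfgb : N.arc f gb
    · exact hfb (hC.dominates_leaf_b hW hn.1 hf hfgb)
    obtain ⟨y, hyv, hya, hyb, hfy⟩ := hC.exists_leaf_dominated hW hn hnear hf hfr hfgb
    have hcb : c ≠ b := fun e => hC.not_mem_visSet_b hW hn.2 (e ▸ hc)
    obtain ⟨f', hf', hf'y⟩ := hC.exists_arc_pa_not_dominates hW (hd y hyv hya hyb) hcb
    have hff' : f' = f := Set.eq_of_mem_of_ncard_eq_one (hC.isTreeVertex_pa hW hf).1 hf' hf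
    exact hf'y (hff' ▸ hfy)
  exact ⟨fun haxc => hnaxb (hC.displays_of_mem_visSet hW hn.2 hab hc hxb haxc), hnaxb⟩
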